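/- arXiv:1106.0655 — 4 statements merged into one kernel-verified Lean document; each statement's English description precedes it below -/
import Mathlib

section
/- Fix a ∈ (0,1), c ∈ ℝ and μ > 0 with sin(μa) ≠ 0 and sin(μ(1−a)) ≠ 0. Then there exists a classical eigenfunction (with jump coefficient c) with eigenvalue μ² if and only if c = f_a(μ) = −μ·sin(μ)/(sin(μa)·sin(μ(1−a))). -/
/-!
On each side of `a`, a solution of `-u'' = μ² u` is determined by its value and derivative at `a`:
its Wronskians with `sin (μ (x - a))` and `cos (μ (x - a))` are constant. The boundary conditions
then give `μ u(a) cos (μ a) = u'(a⁻) sin (μ a)` and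
`μ u(a) cos (μ (1 - a)) = -u'(a⁺) sin (μ (1 - a))`.
If `u(a) = 0` these force `u'(a±) = 0`, hence `u ≡ 0`; otherwise the jump condition together with
`sin μ = sin (μ a) cos (μ (1 - a)) + cos (μ a) sin (μ (1 - a))` yields `c = f_a(μ)`. Conversely,
`sin (μ (1 - a)) sin (μ x)` on `[0, a]` glued to `sin (μ a) sin (μ (1 - x))` on `[a, 1]` has jump
`-μ sin μ` at `a` and value `sin (μ a) sin (μ (1 - a))` there, so it is an eigenfunction for
`c = f_a(μ)`.
-/

open Set Real MeasureTheory

noncomputable section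

/-- `u : [0,1] → ℝ` (modelled as a function on `ℝ`) is *admissible* for the operator `A`
with jump coefficient `c` at `a`: continuous on `[0,1]`, twice continuously differentiable
on `[0,a]` and on `[a,1]` (with one-sided derivatives at `a`), vanishing at `0` and `1`,
and satisfying the jump condition `u'(a⁺) − u'(a⁻) = c·u(a)` (the one-sided derivatives at
`a` being the derivatives within `[a,1]` and `[0,a]` respectively). -/
def Admissible (a c : ℝ) (u : ℝ → ℝ) : Prop :=
  ContinuousOn u (Icc 0 1) ∧
  ContDiffOn ℝ 2 u (Icc 0 a) ∧
  ContDiffOn ℝ 2 u (Icc a 1) ∧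
  u 0 = 0 ∧ u 1 = 0 ∧
  derivWithin u (Icc a 1) a - derivWithin u (Icc 0 a) a = c * u a

/-- `u` is a *classical eigenfunction* of `A` (jump coefficient `c` at `a`) with
eigenvalue `lam`: admissible, not identically zero on `[0,1]`, and satisfying
`−u'' = lam·u` on `(0,a) ∪ (a,1)`. -/
def IsEigenfunction (a c lam : ℝ) (u : ℝ → ℝ) : Prop :=
  Admissible a c u ∧ (∃ x ∈ Icc (0 : ℝ) 1, u x ≠ 0) ∧
  ∀ x ∈ Ioo 0 a ∪ Ioo a 1, -(deriv (deriv u) x) = lam * u x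

/-- The function `f_a(μ) = −μ·sin(μ)/(sin(μa)·sin(μ(1−a)))`. -/
def fA (a μ : ℝ) : ℝ :=
  -(μ * Real.sin μ) / (Real.sin (μ * a) * Real.sin (μ * (1 - a)))

open Filter Topology

lemma sin_eq_sin_mul_cos_add_cos_mul_sin (μ a : ℝ) :
    sin μ = sin (μ * a) * cos (μ * (1 - a)) + cos (μ * a) * sin (μ * (1 - a)) := by
  rw [← sin_add, ← mul_add, add_sub_cancel, mul_one]

lemma constant_of_hasDerivAt_zero_Ioo {f : ℝ → ℝ} {p q : ℝ} (hf : ContinuousOn f (Icc p q))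
    (hf' : ∀ x ∈ Ioo p q, HasDerivAt f 0 x) : ∀ x ∈ Icc p q, f x = f p := by
  rintro x ⟨hpx, hxq⟩
  rcases hpx.eq_or_lt with rfl | hpx
  · rfl
  obtain ⟨_, -, hslope⟩ :=
    exists_hasDerivAt_eq_slope f 0 hpx (hf.mono (Icc_subset_Icc_right hxq)) fun y hy =>
      hf' y ⟨hy.1, hy.2.trans_le hxq⟩
  rwa [Pi.zero_apply, eq_comm, div_eq_zero_iff, sub_eq_zero, or_iff_left (sub_ne_zero.2 hpx.ne')]
    at hslope

theorem wronskian_eq_of_hasDerivAt {p q lam : ℝ} {u u' v v' : ℝ → ℝ}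
    (hu : ContinuousOn u (Icc p q)) (hu' : ContinuousOn u' (Icc p q))
    (hdu : ∀ x ∈ Ioo p q, HasDerivAt u (u' x) x)
    (hdu' : ∀ x ∈ Ioo p q, HasDerivAt u' (-lam * u x) x)
    (hdv : ∀ x, HasDerivAt v (v' x) x) (hdv' : ∀ x, HasDerivAt v' (-lam * v x) x) :
    ∀ x ∈ Icc p q, u' x * v x - u x * v' x = u' p * v p - u p * v' p := by
  have hv : Continuous v := continuous_iff_continuousAt.2 fun x => (hdv x).continuousAt
  have hv' : Continuous v' := continuous_iff_continuousAt.2 fun x => (hdv' x).continuousAt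
  refine constant_of_hasDerivAt_zero_Ioo
    ((hu'.mul hv.continuousOn).sub (hu.mul hv'.continuousOn)) fun x hx => ?_
  exact (((hdu' x hx).mul (hdv x)).sub ((hdu x hx).mul (hdv' x))).congr_deriv (by ring)

lemma ContDiffOn.hasDerivAt_derivWithin_Icc {u : ℝ → ℝ} {p q x : ℝ}
    (hu : ContDiffOn ℝ 2 u (Icc p q)) (hx : x ∈ Ioo p q) :
    HasDerivAt u (derivWithin u (Icc p q) x) x ∧
      HasDerivAt (derivWithin u (Icc p q)) (deriv (deriv u) x) x := by
  have hpq : p < q := hx.1.trans hx.2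
  have hmem : Icc p q ∈ 𝓝 x := Icc_mem_nhds hx.1 hx.2
  have hD : derivWithin u (Icc p q) =ᶠ[𝓝 x] deriv u :=
    eventually_of_mem (Ioo_mem_nhds hx.1 hx.2) fun y hy =>
      derivWithin_of_mem_nhds (Icc_mem_nhds hy.1 hy.2)
  have hD' : DifferentiableAt ℝ (derivWithin u (Icc p q)) x :=
    ((hu.derivWithin (m := 1) (uniqueDiffOn_Icc hpq) (by norm_num)).differentiableOn
      one_ne_zero).differentiableAt hmem
  refine ⟨?_, hD.deriv_eq ▸ hD'.hasDerivAt⟩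
  rw [derivWithin_of_mem_nhds hmem]
  exact ((hu.contDiffAt hmem).differentiableAt (by norm_num)).hasDerivAt

/-- Stated for `μ * u x` so that no division by `μ` is needed. -/
theorem mul_eq_cos_add_sin_of_neg_deriv_deriv_eq {u : ℝ → ℝ} {p q μ x₀ x : ℝ} (hpq : p < q)
    (hu : ContDiffOn ℝ 2 u (Icc p q)) (hu'' : ∀ y ∈ Ioo p q, -deriv (deriv u) y = μ ^ 2 * u y)
    (hx₀ : x₀ ∈ Icc p q) (hx : x ∈ Icc p q) :
    μ * u x = μ * u x₀ * cos (μ * (x - x₀)) + derivWithin u (Icc p q) x₀ * sin (μ * (x - x₀)) := by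
  set u' := derivWithin u (Icc p q)
  have hu' : ContinuousOn u' (Icc p q) :=
    hu.continuousOn_derivWithin (uniqueDiffOn_Icc hpq) (by norm_num)
  have hdu' : ∀ y ∈ Ioo p q, HasDerivAt u' (-μ ^ 2 * u y) y := fun y hy => by
    convert (hu.hasDerivAt_derivWithin_Icc hy).2 using 1
    linarith [hu'' y hy]
  have hdu : ∀ y ∈ Ioo p q, HasDerivAt u (u' y) y := fun y hy =>
    (hu.hasDerivAt_derivWithin_Icc hy).1
  have hsin : ∀ y, HasDerivAt (fun y => sin (μ * (y - x₀))) (μ * cos (μ * (y - x₀))) y :=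
    fun y => (((hasDerivAt_id' y).sub_const x₀).const_mul μ).sin.congr_deriv (by ring)
  have hcos : ∀ y, HasDerivAt (fun y => cos (μ * (y - x₀))) (-μ * sin (μ * (y - x₀))) y :=
    fun y => (((hasDerivAt_id' y).sub_const x₀).const_mul μ).cos.congr_deriv (by ring)
  have Ws := wronskian_eq_of_hasDerivAt hu.continuousOn hu' hdu hdu' hsin
    fun y => ((hcos y).const_mul μ).congr_deriv (by ring)
  have Wc := wronskian_eq_of_hasDerivAt hu.continuousOn hu' hdu hdu' hcos
    fun y => ((hsin y).const_mul (-μ)).congr_deriv (by ring)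
  have hs := (Ws x hx).trans (Ws x₀ hx₀).symm
  have hc := (Wc x hx).trans (Wc x₀ hx₀).symm
  simp only [sub_self, mul_zero, sin_zero, cos_zero] at hs hc
  linear_combination sin (μ * (x - x₀)) * hc - cos (μ * (x - x₀)) * hs
    - μ * u x * sin_sq_add_cos_sq (μ * (x - x₀))

theorem eq_fA_of_isEigenfunction {a c μ : ℝ} {u : ℝ → ℝ} (ha : a ∈ Ioo (0 : ℝ) 1)
    (h1 : sin (μ * a) ≠ 0) (h2 : sin (μ * (1 - a)) ≠ 0) (hu : IsEigenfunction a c (μ ^ 2) u) :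
    c = fA a μ := by
  obtain ⟨⟨-, hu_left, hu_right, hu0, hu1, hjump⟩, ⟨x₀, hx₀, hux₀⟩, hODE⟩ := hu
  have hμ : μ ≠ 0 := by rintro rfl; simp at h1
  set d₁ := derivWithin u (Icc 0 a) a
  set d₂ := derivWithin u (Icc a 1) a
  have rep_left : ∀ x ∈ Icc 0 a,
      μ * u x = μ * u a * cos (μ * (x - a)) + d₁ * sin (μ * (x - a)) := fun x hx =>
    mul_eq_cos_add_sin_of_neg_deriv_deriv_eq ha.1 hu_left (fun y hy => hODE y (Or.inl hy))
      (right_mem_Icc.2 ha.1.le) hx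
  have rep_right : ∀ x ∈ Icc a 1,
      μ * u x = μ * u a * cos (μ * (x - a)) + d₂ * sin (μ * (x - a)) := fun x hx =>
    mul_eq_cos_add_sin_of_neg_deriv_deriv_eq ha.2 hu_right (fun y hy => hODE y (Or.inr hy))
      (left_mem_Icc.2 ha.2.le) hx
  have at_zero : μ * u a * cos (μ * a) = d₁ * sin (μ * a) := by
    have h := rep_left 0 (left_mem_Icc.2 ha.1.le)
    rw [hu0, zero_sub, mul_neg, cos_neg, sin_neg] at h
    linarith
  have at_one : μ * u a * cos (μ * (1 - a)) + d₂ * sin (μ * (1 - a)) = 0 := by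
    simpa [hu1] using (rep_right 1 (right_mem_Icc.2 ha.2.le)).symm
  have hua : u a ≠ 0 := by
    intro hua
    have hd₁ : d₁ = 0 := by simpa [hua, h1] using at_zero.symm
    have hd₂ : d₂ = 0 := by simpa [hua, h2] using at_one
    rcases le_total x₀ a with h | h
    · exact hux₀ (by simpa [hua, hd₁, hμ] using rep_left x₀ ⟨hx₀.1, h⟩)
    · exact hux₀ (by simpa [hua, hd₂, hμ] using rep_right x₀ ⟨h, hx₀.2⟩)
  rw [fA, eq_div_iff (mul_ne_zero h1 h2)]
  refine mul_right_cancel₀ hua ?_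
  linear_combination (-(sin (μ * a) * sin (μ * (1 - a)))) * hjump + sin (μ * a) * at_one
    + sin (μ * (1 - a)) * at_zero + μ * u a * sin_eq_sin_mul_cos_add_cos_mul_sin μ a

def sineMode (a μ x : ℝ) : ℝ :=
  if x ≤ a then sin (μ * (1 - a)) * sin (μ * x) else sin (μ * a) * sin (μ * (1 - x))

lemma sineMode_eqOn_Iic (a μ : ℝ) :
    EqOn (sineMode a μ) (fun x => sin (μ * (1 - a)) * sin (μ * x)) (Iic a) :=
  fun _ hx => if_pos hx

lemma sineMode_eqOn_Ici (a μ : ℝ) :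
    EqOn (sineMode a μ) (fun x => sin (μ * a) * sin (μ * (1 - x))) (Ici a) := by
  intro x hx
  rcases (mem_Ici.1 hx).eq_or_lt with rfl | hax
  · simp only [sineMode, le_refl, if_true, mul_comm]
  · exact if_neg hax.not_ge

lemma continuous_sineMode (a μ : ℝ) : Continuous (sineMode a μ) :=
  Continuous.if_le (by fun_prop) (by fun_prop) continuous_id continuous_const fun x hx => by
    subst hx
    exact mul_comm _ _

lemma deriv_deriv_eq_of_hasDerivAt {g g' : ℝ → ℝ} {g'' x : ℝ} (hg : ∀ y, HasDerivAt g (g' y) y)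
    (hg' : HasDerivAt g' g'' x) : deriv (deriv g) x = g'' := by
  rw [show deriv g = g' from funext fun y => (hg y).deriv]
  exact hg'.deriv

lemma neg_deriv_deriv_const_mul_sin_mul (K μ x : ℝ) :
    -deriv (deriv fun y => K * sin (μ * y)) x = μ ^ 2 * (K * sin (μ * x)) := by
  rw [deriv_deriv_eq_of_hasDerivAt (fun y => ((hasDerivAt_id' y).const_mul μ).sin.const_mul K)
    ((((hasDerivAt_id' x).const_mul μ).cos.mul_const (μ * 1)).const_mul K)]
  ring

lemma neg_deriv_deriv_const_mul_sin_mul_one_sub (K μ x : ℝ) :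
    -deriv (deriv fun y => K * sin (μ * (1 - y))) x = μ ^ 2 * (K * sin (μ * (1 - x))) := by
  rw [deriv_deriv_eq_of_hasDerivAt
    (fun y => (((hasDerivAt_id' y).const_sub 1).const_mul μ).sin.const_mul K)
    (((((hasDerivAt_id' x).const_sub 1).const_mul μ).cos.mul_const (μ * -1)).const_mul K)]
  ring

lemma neg_deriv_deriv_sineMode {a μ x : ℝ} (hx : x ≠ a) :
    -deriv (deriv (sineMode a μ)) x = μ ^ 2 * sineMode a μ x := by
  rcases hx.lt_or_gt with hx | hx
  · have h := (sineMode_eqOn_Iic a μ).eventuallyEq_of_mem (Iic_mem_nhds hx)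
    rw [h.deriv.deriv_eq, h.eq_of_nhds, neg_deriv_deriv_const_mul_sin_mul]
  · have h := (sineMode_eqOn_Ici a μ).eventuallyEq_of_mem (Ici_mem_nhds hx)
    rw [h.deriv.deriv_eq, h.eq_of_nhds, neg_deriv_deriv_const_mul_sin_mul_one_sub]

lemma sineMode_jump {a μ : ℝ} (ha : a ∈ Ioo (0 : ℝ) 1) :
    derivWithin (sineMode a μ) (Icc a 1) a - derivWithin (sineMode a μ) (Icc 0 a) a
      = -(μ * sin μ) := by
  have ha_left : a ∈ Icc 0 a := right_mem_Icc.2 ha.1.le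
  have ha_right : a ∈ Icc a 1 := left_mem_Icc.2 ha.2.le
  have hd₁ := ((((hasDerivAt_id' a).const_mul μ).sin.const_mul (sin (μ * (1 - a))))
    |>.hasDerivWithinAt.congr_of_mem (fun x hx => sineMode_eqOn_Iic a μ hx.2) ha_left)
    |>.derivWithin (uniqueDiffOn_Icc ha.1 a ha_left)
  have hd₂ := (((((hasDerivAt_id' a).const_sub 1).const_mul μ).sin.const_mul (sin (μ * a)))
    |>.hasDerivWithinAt.congr_of_mem (fun x hx => sineMode_eqOn_Ici a μ hx.1) ha_right)
    |>.derivWithin (uniqueDiffOn_Icc ha.2 a ha_right)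
  rw [hd₁, hd₂]
  linear_combination μ * sin_eq_sin_mul_cos_add_cos_mul_sin μ a

theorem isEigenfunction_sineMode {a μ : ℝ} (ha : a ∈ Ioo (0 : ℝ) 1)
    (h1 : sin (μ * a) ≠ 0) (h2 : sin (μ * (1 - a)) ≠ 0) :
    IsEigenfunction a (fA a μ) (μ ^ 2) (sineMode a μ) := by
  have hua : sineMode a μ a = sin (μ * a) * sin (μ * (1 - a)) := by
    rw [sineMode_eqOn_Iic a μ (mem_Iic.2 le_rfl)]
    exact mul_comm _ _
  refine ⟨⟨(continuous_sineMode a μ).continuousOn, ?_, ?_, ?_, ?_, ?_⟩,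
    ⟨a, ⟨ha.1.le, ha.2.le⟩, ?_⟩, fun x hx => neg_deriv_deriv_sineMode ?_⟩
  · exact (by fun_prop : ContDiff ℝ 2 fun x => sin (μ * (1 - a)) * sin (μ * x)).contDiffOn.congr
      ((sineMode_eqOn_Iic a μ).mono Icc_subset_Iic_self)
  · exact (by fun_prop : ContDiff ℝ 2 fun x => sin (μ * a) * sin (μ * (1 - x))).contDiffOn.congr
      ((sineMode_eqOn_Ici a μ).mono Icc_subset_Ici_self)
  · simp [sineMode_eqOn_Iic a μ (show (0 : ℝ) ≤ a from ha.1.le)]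
  · simp [sineMode_eqOn_Ici a μ (show a ≤ 1 from ha.2.le)]
  · rw [sineMode_jump ha, hua, fA, div_mul_cancel₀ _ (mul_ne_zero h1 h2)]
  · rw [hua]
    exact mul_ne_zero h1 h2
  · rcases hx with hx | hx
    exacts [hx.2.ne, hx.1.ne']

theorem eigenvalue_iff_frequency_equation_general {a c μ : ℝ} (ha : a ∈ Ioo (0 : ℝ) 1)
    (h1 : Real.sin (μ * a) ≠ 0) (h2 : Real.sin (μ * (1 - a)) ≠ 0) :
    (∃ u : ℝ → ℝ, IsEigenfunction a c (μ ^ 2) u) ↔ c = fA a μ := by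
  refine ⟨fun ⟨u, hu⟩ => eq_fA_of_isEigenfunction ha h1 h2 hu, ?_⟩
  rintro rfl
  exact ⟨sineMode a μ, isEigenfunction_sineMode ha h1 h2⟩

/-- **Frequency equation for the flute with an open hole.** For `μ > 0` with
`sin(μa) ≠ 0` and `sin(μ(1−a)) ≠ 0`, there exists a classical eigenfunction with
eigenvalue `μ²` and jump coefficient `c` if and only if `c = f_a(μ)`. -/
theorem eigenvalue_iff_frequency_equation {a c μ : ℝ} (ha : a ∈ Ioo (0 : ℝ) 1)
    (hμ : 0 < μ) (h1 : Real.sin (μ * a) ≠ 0) (h2 : Real.sin (μ * (1 - a)) ≠ 0) :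
    (∃ u : ℝ → ℝ, IsEigenfunction a c (μ ^ 2) u) ↔ c = fA a μ :=
  eigenvalue_iff_frequency_equation_general ha h1 h2

end
end

section
/- Fix a ∈ (0,1) and μ > 0 with sin(μa) ≠ 0 and sin(μ(1−a)) ≠ 0, and set c = f_a(μ). Then for every C ≠ 0, the function u defined by u(x) = C·sin(μx) for x ∈ [0,a] and u(x) = C·(sin(μa)/sin(μ(1−a)))·sin(μ(1−x)) for x ∈ [a,1] is well-defined and continuous at a, is an admissible function (with jump coefficient c), and is a classical eigenfunction with eigenvalue μ². -/
open Set Real MeasureTheory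

noncomputable section

/-
Glue `g x = C sin(μx)` on `[0,a]` to `h x = K sin(μ(1-x))` on `[a,1]`, with
`K = C sin(μa)/sin(μ(1-a))` chosen so that `g a = h a`. Both pieces solve `-y'' = μ² y` on all
of `ℝ` and vanish at `0` and `1` respectively, so everything reduces to the jump condition at `a`.
There `g'(a)/g(a) = μ cot(μa)` and `h'(a)/h(a) = -μ cot(μ(1-a))`, and
`f_a(μ) = -μ (cot(μa) + cot(μ(1-a)))` by the addition formula for `sin (μa + μ(1-a))`.
-/

section Gluing

open Filter Topology

variable {a : ℝ} {u g h : ℝ → ℝ}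

theorem continuous_of_eqOn_Iic_of_eqOn_Ici (hg : Continuous g) (hh : Continuous h)
    (hug : EqOn u g (Iic a)) (huh : EqOn u h (Ici a)) : Continuous u := by
  classical
  have hu : u = fun x => if x ≤ a then g x else h x := funext fun x => by
    split_ifs with hx
    exacts [hug hx, huh (le_of_not_ge hx)]
  rw [hu]
  refine hg.if_le hh continuous_id continuous_const fun x hx => ?_
  rw [hx, ← hug self_mem_Iic, huh self_mem_Ici]

theorem derivWithin_Icc_right_of_eqOn_Iic {b : ℝ} (hba : b < a) (hug : EqOn u g (Iic a))
    (hg : DifferentiableAt ℝ g a) : derivWithin u (Icc b a) a = deriv g a := by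
  rw [derivWithin_congr (hug.mono Icc_subset_Iic_self) (hug self_mem_Iic),
    hg.derivWithin (uniqueDiffOn_Icc hba a (right_mem_Icc.2 hba.le))]

theorem derivWithin_Icc_left_of_eqOn_Ici {b : ℝ} (hab : a < b) (huh : EqOn u h (Ici a))
    (hh : DifferentiableAt ℝ h a) : derivWithin u (Icc a b) a = deriv h a := by
  rw [derivWithin_congr (huh.mono Icc_subset_Ici_self) (huh self_mem_Ici),
    hh.derivWithin (uniqueDiffOn_Icc hab a (left_mem_Icc.2 hab.le))]

variable {c : ℝ}

theorem admissible_of_eqOn (ha : a ∈ Ioo 0 1) (hg : ContDiff ℝ 2 g) (hh : ContDiff ℝ 2 h)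
    (hug : EqOn u g (Iic a)) (huh : EqOn u h (Ici a)) (hg0 : g 0 = 0) (hh1 : h 1 = 0)
    (hjump : deriv h a - deriv g a = c * g a) : Admissible a c u := by
  refine ⟨(continuous_of_eqOn_Iic_of_eqOn_Ici hg.continuous hh.continuous hug huh).continuousOn,
    hg.contDiffOn.congr (hug.mono Icc_subset_Iic_self),
    hh.contDiffOn.congr (huh.mono Icc_subset_Ici_self),
    (hug ha.1.le).trans hg0, (huh ha.2.le).trans hh1, ?_⟩
  rw [derivWithin_Icc_left_of_eqOn_Ici ha.2 huh (hh.differentiable two_ne_zero a),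
    derivWithin_Icc_right_of_eqOn_Iic ha.1 hug (hg.differentiable two_ne_zero a),
    hug self_mem_Iic, hjump]

theorem isEigenfunction_of_eqOn {lam : ℝ} (ha : a ∈ Ioo 0 1) (hadm : Admissible a c u)
    (hug : EqOn u g (Iic a)) (huh : EqOn u h (Ici a)) (hga : g a ≠ 0)
    (hg : ∀ x, -deriv (deriv g) x = lam * g x) (hh : ∀ x, -deriv (deriv h) x = lam * h x) :
    IsEigenfunction a c lam u := by
  refine ⟨hadm, ⟨a, Ioo_subset_Icc_self ha, hug self_mem_Iic ▸ hga⟩, ?_⟩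
  rintro x (hx | hx)
  · have hev : u =ᶠ[𝓝 x] g :=
      eventuallyEq_of_mem (Iio_mem_nhds hx.2) (hug.mono Iio_subset_Iic_self)
    rw [hev.deriv.deriv_eq, hug hx.2.le, hg]
  · have hev : u =ᶠ[𝓝 x] h :=
      eventuallyEq_of_mem (Ioi_mem_nhds hx.1) (huh.mono Ioi_subset_Ici_self)
    rw [hev.deriv.deriv_eq, huh hx.1.le, hh]

end Gluing

section Trig

variable (μ : ℝ)

theorem deriv_sin_mul : deriv (fun x => sin (μ * x)) = fun x => μ * cos (μ * x) := by
  funext x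
  rw [((hasDerivAt_id' x).const_mul μ).sin.deriv]
  simp [mul_comm]

theorem deriv_cos_mul : deriv (fun x => cos (μ * x)) = fun x => -μ * sin (μ * x) := by
  funext x
  rw [((hasDerivAt_id' x).const_mul μ).cos.deriv]
  simp [mul_comm]

theorem deriv_sin_mul_one_sub :
    deriv (fun x => sin (μ * (1 - x))) = fun x => -μ * cos (μ * (1 - x)) := by
  funext x
  rw [(((hasDerivAt_id' x).const_sub 1).const_mul μ).sin.deriv]
  simp [mul_comm]

theorem deriv_cos_mul_one_sub :
    deriv (fun x => cos (μ * (1 - x))) = fun x => μ * sin (μ * (1 - x)) := by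
  funext x
  rw [(((hasDerivAt_id' x).const_sub 1).const_mul μ).cos.deriv]
  simp [mul_comm]

end Trig

theorem fA_eq_neg_mul_cot_add_cot {a μ : ℝ} (h1 : sin (μ * a) ≠ 0)
    (h2 : sin (μ * (1 - a)) ≠ 0) :
    fA a μ = -μ * (cot (μ * a) + cot (μ * (1 - a))) := by
  have hsum : sin μ = sin (μ * a + μ * (1 - a)) := by ring_nf
  rw [fA, cot_eq_cos_div_sin, cot_eq_cos_div_sin, hsum, sin_add]
  field_simp
  ring

theorem explicit_eigenfunction_general {a μ : ℝ} (ha : a ∈ Ioo (0 : ℝ) 1)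
    (h1 : Real.sin (μ * a) ≠ 0) (h2 : Real.sin (μ * (1 - a)) ≠ 0)
    {C : ℝ} (hC : C ≠ 0) (u : ℝ → ℝ)
    (hu : ∀ x : ℝ, u x = if x ≤ a then C * Real.sin (μ * x)
      else C * (Real.sin (μ * a) / Real.sin (μ * (1 - a))) * Real.sin (μ * (1 - x))) :
    ContinuousAt u a ∧ Admissible a (fA a μ) u ∧
      IsEigenfunction a (fA a μ) (μ ^ 2) u := by
  set K := C * (sin (μ * a) / sin (μ * (1 - a)))
  set g : ℝ → ℝ := fun x => C * sin (μ * x)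
  set h : ℝ → ℝ := fun x => K * sin (μ * (1 - x))
  have hug : EqOn u g (Iic a) := fun x (hx : x ≤ a) => by rw [hu, if_pos hx]
  have huh : EqOn u h (Ici a) := by
    rintro x (hx : a ≤ x)
    obtain rfl | hx := hx.eq_or_lt
    · rw [hug self_mem_Iic]
      simp only [g, h, K]
      field_simp
    · rw [hu, if_neg hx.not_ge]
  have hg : ContDiff ℝ 2 g := by fun_prop
  have hh : ContDiff ℝ 2 h := by fun_prop
  have hjump : deriv h a - deriv g a = fA a μ * g a := by
    simp only [g, h, K, deriv_const_mul_field', deriv_sin_mul, deriv_sin_mul_one_sub,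
      fA_eq_neg_mul_cot_add_cot h1 h2, cot_eq_cos_div_sin]
    field_simp
    ring
  have hadm := admissible_of_eqOn ha hg hh hug huh (by simp [g]) (by simp [h]) hjump
  refine ⟨(continuous_of_eqOn_Iic_of_eqOn_Ici hg.continuous hh.continuous hug huh).continuousAt,
    hadm, isEigenfunction_of_eqOn ha hadm hug huh (mul_ne_zero hC h1) (fun x => ?_) (fun x => ?_)⟩
  · simp only [g, deriv_const_mul_field', deriv_sin_mul, deriv_cos_mul]
    ring
  · simp only [h, deriv_const_mul_field', deriv_sin_mul_one_sub, deriv_cos_mul_one_sub]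
    ring

/-- **The explicit eigenfunctions of `A`.** For `μ > 0` with `sin(μa) ≠ 0` and
`sin(μ(1−a)) ≠ 0` and `c = f_a(μ)`, for every `C ≠ 0` the function equal to
`C·sin(μx)` on `[0,a]` and to `C·(sin(μa)/sin(μ(1−a)))·sin(μ(1−x))` on `[a,1]`
is well defined and continuous at `a`, is admissible with jump coefficient `c`,
and is a classical eigenfunction with eigenvalue `μ²`. -/
theorem explicit_eigenfunction {a μ : ℝ} (ha : a ∈ Ioo (0 : ℝ) 1) (hμ : 0 < μ)
    (h1 : Real.sin (μ * a) ≠ 0) (h2 : Real.sin (μ * (1 - a)) ≠ 0)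
    {C : ℝ} (hC : C ≠ 0) (u : ℝ → ℝ)
    (hu : ∀ x : ℝ, u x = if x ≤ a then C * Real.sin (μ * x)
      else C * (Real.sin (μ * a) / Real.sin (μ * (1 - a))) * Real.sin (μ * (1 - x))) :
    ContinuousAt u a ∧ Admissible a (fA a μ) u ∧
      IsEigenfunction a (fA a μ) (μ ^ 2) u :=
  explicit_eigenfunction_general ha h1 h2 hC u hu

end
end

section
/- Fix a ∈ (0,1), c ∈ ℝ and μ > 0 with sin(μa) ≠ 0 and sin(μ(1−a)) ≠ 0. If u is a classical eigenfunction (with jump coefficient c) with eigenvalue μ², then necessarily c = f_a(μ), and there exists C ≠ 0 such that u(x) = C·sin(μx) for all x ∈ [0,a] and u(x) = C·(sin(μa)/sin(μ(1−a)))·sin(μ(1−x)) for all x ∈ [a,1]. -/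
/-!
On each of `[0,a]` and `[a,1]` the equation `-u'' = μ²u` forces `u` to be a combination of
`sin (μ (x - t))` and `cos (μ (x - t))`, because the Wronskians of `u` with these two solutions
are constant. The boundary conditions leave `u = A sin (μx)` on `[0,a]` and
`u = B sin (μ (x - 1))` on `[a,1]`; continuity at `a` links `A` and `B`, nontriviality of `u`
gives `A ≠ 0`, and with `sin μ = sin (μa) cos (μ (a - 1)) - cos (μa) sin (μ (a - 1))` the jump
condition becomes `c = f_a(μ)`.
-/

open Set Real MeasureTheory

noncomputable section

section HarmonicOscillator

variable {μ : ℝ}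

lemma hasDerivAt_wronskian_eq_zero {k x : ℝ} {f f' g g' : ℝ → ℝ}
    (hf : HasDerivAt f (f' x) x) (hf' : HasDerivAt f' (k * f x) x)
    (hg : HasDerivAt g (g' x) x) (hg' : HasDerivAt g' (k * g x) x) :
    HasDerivAt (fun y => f y * g' y - f' y * g y) 0 x :=
  ((hf.mul hg').sub (hf'.mul hg)).congr_deriv (by ring)

lemma hasDerivAt_sin_mul_sub (t x : ℝ) :
    HasDerivAt (fun y => sin (μ * (y - t))) (μ * cos (μ * (x - t))) x :=
  (((hasDerivAt_id' x).sub_const t).const_mul μ).sin.congr_deriv (by ring)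

lemma hasDerivAt_cos_mul_sub (t x : ℝ) :
    HasDerivAt (fun y => cos (μ * (y - t))) (-μ * sin (μ * (x - t))) x :=
  (((hasDerivAt_id' x).sub_const t).const_mul μ).cos.congr_deriv (by ring)

lemma exists_eqOn_sin_cos_of_hasDerivAt {s : Set ℝ} {u u' : ℝ → ℝ} (hs : IsOpen s)
    (hs' : IsPreconnected s) (hμ : μ ≠ 0) (t : ℝ) (hu : ∀ x ∈ s, HasDerivAt u (u' x) x)
    (hu' : ∀ x ∈ s, HasDerivAt u' (-μ ^ 2 * u x) x) :
    ∃ A B : ℝ, EqOn u (fun x => A * sin (μ * (x - t)) + B * cos (μ * (x - t))) s := by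
  have hconst : ∀ {f f' : ℝ → ℝ}, (∀ x, HasDerivAt f (f' x) x) →
      (∀ x, HasDerivAt f' (-μ ^ 2 * f x) x) →
      ∃ K, ∀ x ∈ s, f x * u' x - f' x * u x = K := fun hf hf' =>
    hs.exists_is_const_of_deriv_eq_zero hs'
      (fun x hx => (hasDerivAt_wronskian_eq_zero (hf x) (hf' x) (hu x hx) (hu' x hx))
        |>.differentiableAt.differentiableWithinAt)
      (fun x hx => (hasDerivAt_wronskian_eq_zero (hf x) (hf' x) (hu x hx) (hu' x hx)).deriv)
  obtain ⟨K, hK⟩ := hconst (hasDerivAt_cos_mul_sub t)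
    fun x => ((hasDerivAt_sin_mul_sub t x).const_mul (-μ)).congr_deriv (by ring)
  obtain ⟨L, hL⟩ := hconst (hasDerivAt_sin_mul_sub t)
    fun x => ((hasDerivAt_cos_mul_sub t x).const_mul μ).congr_deriv (by ring)
  refine ⟨K / μ, -L / μ, fun x hx => ?_⟩
  -- the two Wronskians recover `μ * u` since `sin² + cos² = 1`
  have := sin_sq_add_cos_sq (μ * (x - t))
  field_simp
  linear_combination (-(μ * u x)) * this + sin (μ * (x - t)) * hK x hx
    - cos (μ * (x - t)) * hL x hx

variable {p q : ℝ} {u : ℝ → ℝ}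

lemma exists_eqOn_sin_cos_Icc (hpq : p < q) (hμ : μ ≠ 0) (t : ℝ)
    (hu : ContDiffOn ℝ 2 u (Icc p q))
    (hode : ∀ x ∈ Ioo p q, -deriv (deriv u) x = μ ^ 2 * u x) :
    ∃ A B : ℝ, EqOn u (fun x => A * sin (μ * (x - t)) + B * cos (μ * (x - t))) (Icc p q) := by
  have hu₂ : ContDiffOn ℝ 2 u (Ioo p q) := hu.mono Ioo_subset_Icc_self
  have hu₁ : ContDiffOn ℝ 1 (deriv u) (Ioo p q) := hu₂.deriv_of_isOpen isOpen_Ioo (by norm_num)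
  have hasDerivAt_of {f : ℝ → ℝ} {n : WithTop ℕ∞} (hf : ContDiffOn ℝ n f (Ioo p q))
      (hn : n ≠ 0) {x : ℝ} (hx : x ∈ Ioo p q) : HasDerivAt f (deriv f x) x :=
    ((hf.differentiableOn hn x hx).differentiableAt (isOpen_Ioo.mem_nhds hx)).hasDerivAt
  obtain ⟨A, B, hAB⟩ := exists_eqOn_sin_cos_of_hasDerivAt isOpen_Ioo isPreconnected_Ioo hμ t
    (fun x hx => hasDerivAt_of hu₂ (by norm_num) hx)
    (fun x hx => by
      convert hasDerivAt_of hu₁ (by norm_num) hx using 1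
      linarith [hode x hx])
  refine ⟨A, B, hAB.of_subset_closure hu.continuousOn (by fun_prop) Ioo_subset_Icc_self ?_⟩
  rw [closure_Ioo hpq.ne]

lemma exists_eqOn_mul_sin_Icc_of_eq_zero {t : ℝ} (hpq : p < q) (hμ : μ ≠ 0)
    (hu : ContDiffOn ℝ 2 u (Icc p q))
    (hode : ∀ x ∈ Ioo p q, -deriv (deriv u) x = μ ^ 2 * u x)
    (ht : t ∈ Icc p q) (hut : u t = 0) :
    ∃ A : ℝ, EqOn u (fun x => A * sin (μ * (x - t))) (Icc p q) := by
  obtain ⟨A, B, hAB⟩ := exists_eqOn_sin_cos_Icc hpq hμ t hu hode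
  have hB : B = 0 := by simpa [hut] using (hAB ht).symm
  exact ⟨A, fun x hx => by simpa [hB] using hAB hx⟩

lemma derivWithin_Icc_of_eqOn_mul_sin {A t x : ℝ} (hpq : p < q) (hx : x ∈ Icc p q)
    (h : EqOn u (fun y => A * sin (μ * (y - t))) (Icc p q)) :
    derivWithin u (Icc p q) x = A * (μ * cos (μ * (x - t))) := by
  rw [derivWithin_congr h (h hx)]
  exact ((hasDerivAt_sin_mul_sub t x).const_mul A).hasDerivWithinAt.derivWithin
    (uniqueDiffOn_Icc hpq x hx)

end HarmonicOscillator

lemma eq_fA_of_jump {a c μ A B : ℝ} (h1 : sin (μ * a) ≠ 0) (h2 : sin (μ * (1 - a)) ≠ 0)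
    (hA : A ≠ 0) (hmatch : A * sin (μ * a) = B * sin (μ * (a - 1)))
    (hjump : B * (μ * cos (μ * (a - 1))) - A * (μ * cos (μ * a)) = c * (A * sin (μ * a))) :
    c = fA a μ := by
  have hsin : sin μ = sin (μ * a) * cos (μ * (a - 1)) - cos (μ * a) * sin (μ * (a - 1)) := by
    rw [← sin_sub]; ring_nf
  have hflip : sin (μ * (a - 1)) = -sin (μ * (1 - a)) := by rw [← sin_neg]; ring_nf
  have key : A * (c * (sin (μ * a) * sin (μ * (1 - a)))) = A * -(μ * sin μ) := by
    linear_combination sin (μ * (a - 1)) * hjump + μ * cos (μ * (a - 1)) * hmatch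
      + A * μ * hsin + A * c * sin (μ * a) * hflip
  rw [fA, eq_div_iff (mul_ne_zero h1 h2)]
  exact mul_left_cancel₀ hA key

/-- **Necessity of the frequency equation and the form of eigenfunctions.** For `μ > 0`
with `sin(μa) ≠ 0` and `sin(μ(1−a)) ≠ 0`, if `u` is a classical eigenfunction with
eigenvalue `μ²` and jump coefficient `c`, then `c = f_a(μ)` and there is `C ≠ 0` with
`u(x) = C·sin(μx)` on `[0,a]` and `u(x) = C·(sin(μa)/sin(μ(1−a)))·sin(μ(1−x))` on
`[a,1]`. -/
theorem eigenfunction_form {a c μ : ℝ} (ha : a ∈ Ioo (0 : ℝ) 1) (hμ : 0 < μ)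
    (h1 : Real.sin (μ * a) ≠ 0) (h2 : Real.sin (μ * (1 - a)) ≠ 0)
    {u : ℝ → ℝ} (hu : IsEigenfunction a c (μ ^ 2) u) :
    c = fA a μ ∧ ∃ C : ℝ, C ≠ 0 ∧
      (∀ x ∈ Icc 0 a, u x = C * Real.sin (μ * x)) ∧
      (∀ x ∈ Icc a 1, u x =
        C * (Real.sin (μ * a) / Real.sin (μ * (1 - a))) * Real.sin (μ * (1 - x))) := by
  obtain ⟨⟨-, hC0, hC1, hu0, hu1, hjump⟩, ⟨x₀, hx₀, hux₀⟩, hode⟩ := hu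
  have ha₀ : a ∈ Icc 0 a := ⟨ha.1.le, le_rfl⟩
  have ha₁ : a ∈ Icc a 1 := ⟨le_rfl, ha.2.le⟩
  obtain ⟨A, hA⟩ := exists_eqOn_mul_sin_Icc_of_eq_zero ha.1 hμ.ne' hC0
    (fun x hx => hode x (Or.inl hx)) ⟨le_rfl, ha.1.le⟩ hu0
  obtain ⟨B, hB⟩ := exists_eqOn_mul_sin_Icc_of_eq_zero ha.2 hμ.ne' hC1
    (fun x hx => hode x (Or.inr hx)) ⟨ha.2.le, le_rfl⟩ hu1
  rw [derivWithin_Icc_of_eqOn_mul_sin ha.2 ha₁ hB, derivWithin_Icc_of_eqOn_mul_sin ha.1 ha₀ hA,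
    hA ha₀] at hjump
  simp only [sub_zero] at hA hjump
  have hmatch : A * sin (μ * a) = B * sin (μ * (a - 1)) := (hA ha₀).symm.trans (hB ha₁)
  have hflip (y : ℝ) : sin (μ * (y - 1)) = -sin (μ * (1 - y)) := by rw [← sin_neg]; ring_nf
  have hA0 : A ≠ 0 := by
    rintro rfl
    have hB0 : B = 0 := by simpa [hflip, h2] using hmatch.symm
    rcases le_total x₀ a with h | h
    · exact hux₀ (by simpa using hA ⟨hx₀.1, h⟩)
    · exact hux₀ (by simpa [hB0] using hB ⟨h, hx₀.2⟩)
  refine ⟨eq_fA_of_jump h1 h2 hA0 hmatch hjump, A, hA0, hA, fun x hx => ?_⟩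
  rw [hB hx]
  simp only [hflip] at hmatch ⊢
  field_simp
  linear_combination -sin (μ * (1 - x)) * hmatch

end
end

section
/- Fix a ∈ (0,1) and c ≥ 0. If λ ∈ ℝ admits a classical eigenfunction (with jump coefficient c), then λ > 0. (The operator A is positive definite: all its eigenvalues are strictly positive.) -/
open Set Real MeasureTheory

noncomputable section

/-! For `λ ≤ 0` the function `G = u u'` satisfies `G' = u'² - λ u² ≥ 0` on each of `[0, a]`
and `[a, 1]`, so it increases from `G(0) = 0` up to `G(a⁻)` and from `G(a⁺)` up to `G(1) = 0`,
while the jump condition gives `G(a⁺) - G(a⁻) = c u(a)² ≥ 0`. Hence `G ≡ 0` on both pieces, so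
`(u²)' = 2G` vanishes and `u² ≡ u(0)² = 0`. This is the pointwise form of the energy identity
`∫ u'² + c u(a)² = λ ∫ u²`. -/

theorem MonotoneOn.eqOn_zero_Icc {α β : Type*} [Preorder α] [PartialOrder β] [Zero β]
    {f : α → β} {p q : α} (hf : MonotoneOn f (Icc p q)) (hp : f p = 0) (hq : f q = 0) :
    EqOn f 0 (Icc p q) := fun _ hy => by
  have := hf.mapsTo_Icc hy
  rw [hp, hq] at this
  exact le_antisymm this.2 this.1

section

variable {u : ℝ → ℝ} {p q lam : ℝ}

theorem hasDerivAt_mul_derivWithin_Icc (hu : ContDiffOn ℝ 2 u (Icc p q)) {x : ℝ}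
    (hx : x ∈ Ioo p q) :
    HasDerivAt (fun y => u y * derivWithin u (Icc p q) y)
      (deriv u x ^ 2 + u x * deriv (deriv u) x) x := by
  have hu' : ContDiffOn ℝ 2 u (Ioo p q) := hu.mono Ioo_subset_Icc_self
  have hu_diff : DifferentiableAt ℝ u x :=
    (hu'.differentiableOn two_ne_zero).differentiableAt (isOpen_Ioo.mem_nhds hx)
  have hdu_diff : DifferentiableAt ℝ (deriv u) x :=
    ((hu'.deriv_of_isOpen isOpen_Ioo (m := 1) (by norm_num)).differentiableOn
      one_ne_zero).differentiableAt (isOpen_Ioo.mem_nhds hx)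
  have hG : HasDerivAt (fun y => u y * deriv u y) (deriv u x ^ 2 + u x * deriv (deriv u) x) x := by
    simpa only [sq] using hu_diff.hasDerivAt.fun_mul hdu_diff.hasDerivAt
  refine hG.congr_of_eventuallyEq ?_
  filter_upwards [isOpen_Ioo.mem_nhds hx] with y hy
  rw [derivWithin_of_mem_nhds (Icc_mem_nhds hy.1 hy.2)]

theorem monotoneOn_mul_derivWithin_Icc (hpq : p < q) (hu : ContDiffOn ℝ 2 u (Icc p q))
    (heq : ∀ x ∈ Ioo p q, -(deriv (deriv u) x) = lam * u x) (hlam : lam ≤ 0) :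
    MonotoneOn (fun y => u y * derivWithin u (Icc p q) y) (Icc p q) := by
  have hcont : ContinuousOn (fun y => u y * derivWithin u (Icc p q) y) (Icc p q) :=
    hu.continuousOn.mul (hu.continuousOn_derivWithin (uniqueDiffOn_Icc hpq) (by norm_num))
  refine monotoneOn_of_deriv_nonneg (convex_Icc p q) hcont ?_ ?_ <;> rw [interior_Icc]
  · exact fun x hx =>
      (hasDerivAt_mul_derivWithin_Icc hu hx).differentiableAt.differentiableWithinAt
  · intro x hx
    rw [(hasDerivAt_mul_derivWithin_Icc hu hx).deriv, show deriv (deriv u) x = -(lam * u x) by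
      linarith [heq x hx]]
    nlinarith [sq_nonneg (deriv u x), sq_nonneg (u x)]

theorem eqOn_zero_of_mul_derivWithin_Icc_eq_zero (hpq : p < q)
    (hu : DifferentiableOn ℝ u (Icc p q))
    (hG : EqOn (fun y => u y * derivWithin u (Icc p q) y) 0 (Icc p q)) (hp : u p = 0) :
    EqOn u 0 (Icc p q) := by
  have hsq : ∀ y ∈ Icc p q, u y ^ 2 = u p ^ 2 := by
    refine constant_of_derivWithin_zero (hu.pow 2) fun y hy => ?_
    have hy' : y ∈ Icc p q := Ico_subset_Icc_self hy
    rw [((hu y hy').hasDerivWithinAt.fun_pow 2).derivWithin (uniqueDiffOn_Icc hpq y hy')]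
    simp [mul_assoc, hG hy']
  intro y hy
  simpa [hp] using hsq y hy

end

theorem Admissible.eqOn_zero_of_nonpos {a c lam : ℝ} {u : ℝ → ℝ} (ha : a ∈ Ioo (0 : ℝ) 1)
    (hc : 0 ≤ c) (hu : Admissible a c u)
    (heq : ∀ x ∈ Ioo 0 a ∪ Ioo a 1, -(deriv (deriv u) x) = lam * u x) (hlam : lam ≤ 0) :
    EqOn u 0 (Icc 0 1) := by
  obtain ⟨-, hu₁, hu₂, hu0, hu1, hjump⟩ := hu
  set G₁ := fun y => u y * derivWithin u (Icc 0 a) y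
  set G₂ := fun y => u y * derivWithin u (Icc a 1) y
  have hG₁ : MonotoneOn G₁ (Icc 0 a) :=
    monotoneOn_mul_derivWithin_Icc ha.1 hu₁ (fun x hx => heq x (.inl hx)) hlam
  have hG₂ : MonotoneOn G₂ (Icc a 1) :=
    monotoneOn_mul_derivWithin_Icc ha.2 hu₂ (fun x hx => heq x (.inr hx)) hlam
  have hG₁0 : G₁ 0 = 0 := by simp [G₁, hu0]
  have hG₂1 : G₂ 1 = 0 := by simp [G₂, hu1]
  have hG_jump : G₂ a - G₁ a = c * u a ^ 2 := by
    simp only [G₁, G₂]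
    rw [← mul_sub, hjump]
    ring
  have hG₁a : G₁ 0 ≤ G₁ a := hG₁ (left_mem_Icc.2 ha.1.le) (right_mem_Icc.2 ha.1.le) ha.1.le
  have hG₂a : G₂ a ≤ G₂ 1 := hG₂ (left_mem_Icc.2 ha.2.le) (right_mem_Icc.2 ha.2.le) ha.2.le
  have hcu : 0 ≤ c * u a ^ 2 := by positivity
  have hG₁a0 : G₁ a = 0 := by linarith
  have hG₂a0 : G₂ a = 0 := by linarith
  have hu_left := eqOn_zero_of_mul_derivWithin_Icc_eq_zero ha.1
    (hu₁.differentiableOn two_ne_zero) (hG₁.eqOn_zero_Icc hG₁0 hG₁a0) hu0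
  have hu_right := eqOn_zero_of_mul_derivWithin_Icc_eq_zero ha.2
    (hu₂.differentiableOn two_ne_zero) (hG₂.eqOn_zero_Icc hG₂a0 hG₂1)
    (hu_left (right_mem_Icc.2 ha.1.le))
  rw [← Icc_union_Icc_eq_Icc ha.1.le ha.2.le]
  exact hu_left.union hu_right

/-- **The operator `A` is positive definite.** For `c ≥ 0`, every `λ` admitting a
classical eigenfunction with jump coefficient `c` is strictly positive. -/
theorem eigenvalue_positive {a c lam : ℝ} (ha : a ∈ Ioo (0 : ℝ) 1) (hc : 0 ≤ c)
    (h : ∃ u : ℝ → ℝ, IsEigenfunction a c lam u) : 0 < lam := by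
  obtain ⟨u, hu, ⟨x, hx, hux⟩, heq⟩ := h
  by_contra! hlam
  exact hux (hu.eqOn_zero_of_nonpos ha hc heq hlam hx)

end
end
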